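/- arXiv:1301.0460 — 2 statements merged into one kernel-verified Lean document; each statement's English description precedes it below -/
import Mathlib

section
/- If G is a graph of diameter two on at least three vertices with a cut vertex, then γₜ(G) = 2. -/
/-- The total domination number of a graph, as an extended natural number
(`⊤` when no total dominating set exists). -/
noncomputable def gammaT {V : Type*} (G : SimpleGraph V) : ℕ∞ :=
  sInf {n : ℕ∞ | ∃ S : Finset V, (S.card : ℕ∞) = n ∧ ∀ v : V, ∃ u ∈ S, G.Adj v u}

/-- G has diameter two. -/
def DiamTwo {V : Type*} (G : SimpleGraph V) : Prop :=
  (∀ u v : V, u ≠ v → G.Adj u v ∨ ∃ w : V, G.Adj u w ∧ G.Adj w v) ∧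
    ∃ u v : V, u ≠ v ∧ ¬ G.Adj u v

/-- Removing the vertex set S disconnects G. -/
def RemovalDisconnects {V : Type*} (G : SimpleGraph V) (S : Set V) : Prop :=
  ∃ a b : (Sᶜ : Set V), ¬ (G.induce Sᶜ).Reachable a b

/-- G is 3-γₜ-edge-critical. -/
def Critical3 {V : Type*} [DecidableEq V] (G : SimpleGraph V) : Prop :=
  gammaT G = 3 ∧
    ∀ u v : V, u ≠ v → ¬ G.Adj u v →
      gammaT (G ⊔ SimpleGraph.fromEdgeSet {s(u, v)}) = 2

/-! A cut vertex `v` of a graph of diameter two is adjacent to every other vertex: a vertex `u`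
not adjacent to `v` would reach every vertex within distance two avoiding `v`, so `G - v` would be
connected. Hence `{v, w}`, for any neighbour `w` of `v`, is a total dominating set, and no total
dominating set has fewer than two vertices, since it contains a vertex together with one of its
neighbours. -/

namespace SimpleGraph

variable {V : Type*} (G : SimpleGraph V)

def IsTotalDominating (S : Finset V) : Prop :=
  ∀ x : V, ∃ u ∈ S, G.Adj x u

variable {G}

theorem gammaT_le_card {S : Finset V} (hS : G.IsTotalDominating S) : gammaT G ≤ S.card :=
  sInf_le ⟨S, rfl, hS⟩

theorem IsTotalDominating.two_le_card [Nonempty V] {S : Finset V} (hS : G.IsTotalDominating S) :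
    2 ≤ S.card := by
  classical
  obtain ⟨s, hs, -⟩ := hS (Classical.arbitrary V)
  obtain ⟨t, ht, hst⟩ := hS s
  calc 2 = ({s, t} : Finset V).card := (Finset.card_pair hst.ne).symm
    _ ≤ S.card := Finset.card_le_card (Finset.insert_subset hs (Finset.singleton_subset_iff.2 ht))

theorem two_le_gammaT [Nonempty V] : 2 ≤ gammaT G := by
  refine le_sInf ?_
  rintro n ⟨S, rfl, hS⟩
  exact_mod_cast IsTotalDominating.two_le_card hS

theorem isTotalDominating_pair_of_forall_adj [DecidableEq V] {v w : V}
    (hv : ∀ u, u ≠ v → G.Adj v u) (hvw : G.Adj v w) : G.IsTotalDominating {v, w} := by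
  intro x
  by_cases hx : x = v
  · exact ⟨w, by simp, hx ▸ hvw⟩
  · exact ⟨v, by simp, (hv x hx).symm⟩

theorem gammaT_le_two_of_forall_adj {v w : V} (hv : ∀ u, u ≠ v → G.Adj v u) (hvw : G.Adj v w) :
    gammaT G ≤ 2 := by
  classical
  calc gammaT G ≤ ({v, w} : Finset V).card :=
        gammaT_le_card (isTotalDominating_pair_of_forall_adj hv hvw)
    _ = 2 := by rw [Finset.card_pair hvw.ne]; rfl

theorem reachable_induce_compl_singleton_of_not_adj
    (hdist : ∀ x y : V, x ≠ y → G.Adj x y ∨ ∃ w, G.Adj x w ∧ G.Adj w y)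
    {v u : V} (huv : ¬ G.Adj u v) (hu : u ∈ ({v}ᶜ : Set V)) (x : ({v}ᶜ : Set V)) :
    (G.induce ({v}ᶜ : Set V)).Reachable ⟨u, hu⟩ x := by
  obtain ⟨x, hx⟩ := x
  obtain rfl | hux := eq_or_ne u x
  · rfl
  rcases hdist u x hux with hadj | ⟨w, huw, hwx⟩
  · exact Adj.reachable (by simpa using hadj)
  · have hw : w ∈ ({v}ᶜ : Set V) := by
      rintro rfl
      exact huv huw
    exact (Adj.reachable (G := G.induce _) (v := ⟨w, hw⟩) (by simpa using huw)).trans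
      (Adj.reachable (by simpa using hwx))

theorem adj_of_removalDisconnects_singleton
    (hdist : ∀ x y : V, x ≠ y → G.Adj x y ∨ ∃ w, G.Adj x w ∧ G.Adj w y)
    {v : V} (hcut : RemovalDisconnects G {v}) {u : V} (hu : u ≠ v) : G.Adj v u := by
  by_contra hvu
  obtain ⟨a, b, hab⟩ := hcut
  have reach := reachable_induce_compl_singleton_of_not_adj hdist (fun h ↦ hvu h.symm)
    (Set.mem_compl_singleton_iff.2 hu)
  exact hab ((reach a).symm.trans (reach b))

end SimpleGraph

theorem stmt8_general {V : Type*} (G : SimpleGraph V)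
    (hdiam : DiamTwo G)
    (v : V) (hcut : RemovalDisconnects G {v}) :
    gammaT G = 2 := by
  have hv : ∀ u, u ≠ v → G.Adj v u := fun _ ↦ G.adj_of_removalDisconnects_singleton hdiam.1 hcut
  obtain ⟨w, hw⟩ : ∃ w, w ≠ v := by
    obtain ⟨a, b, hab, -⟩ := hdiam.2
    by_cases ha : a = v
    · exact ⟨b, ha ▸ hab.symm⟩
    · exact ⟨a, ha⟩
  have : Nonempty V := ⟨v⟩
  exact le_antisymm (G.gammaT_le_two_of_forall_adj hv (hv w hw)) G.two_le_gammaT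

/-- A diameter-two graph on at least three vertices with a cut
vertex has total domination number two. -/
theorem stmt8 {V : Type*} [Fintype V] [DecidableEq V] (G : SimpleGraph V)
    (hn : 3 ≤ Fintype.card V) (hconn : G.Connected) (hdiam : DiamTwo G)
    (v : V) (hcut : RemovalDisconnects G {v}) :
    gammaT G = 2 :=
  stmt8_general G hdiam v hcut
end

section
/- If G is a 3-γₜ-edge-critical graph on n vertices whose vertex connectivity equals two, and G has diameter two, then |E(Gᶜ)| < ⌊n²/4⌋. -/
section

open SimpleGraph Finset

variable {V : Type*} {G : SimpleGraph V} {a b c d e p q s t u v w x y z : V}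

theorem gammaT_le_two (h : ∀ z, G.Adj z a ∨ G.Adj z b) : gammaT G ≤ 2 := by
  classical
  have hab : ((#{a, b} : ℕ) : ℕ∞) ∈
      {n : ℕ∞ | ∃ S : Finset V, (#S : ℕ∞) = n ∧ ∀ v, ∃ u ∈ S, G.Adj v u} := by
    refine ⟨{a, b}, rfl, fun z => ?_⟩
    rcases h z with h | h
    exacts [⟨a, by simp, h⟩, ⟨b, by simp, h⟩]
  exact (sInf_le hab).trans (by exact_mod_cast card_le_two)

theorem not_forall_adj_or_adj_of_gammaT_eq_three (h3 : gammaT G = 3) :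
    ¬∀ z, G.Adj z a ∨ G.Adj z b := fun h => by
  have := gammaT_le_two h
  rw [h3] at this
  exact absurd this (by norm_num)

theorem exists_forall_adj_or_adj_of_gammaT_eq_two (h2 : gammaT G = 2) (v : V) :
    ∃ a b, ∀ z, G.Adj z a ∨ G.Adj z b := by
  classical
  obtain ⟨_, ⟨S, rfl, hS⟩, hlt⟩ :=
    sInf_lt_iff.mp (h2.trans_lt (by norm_num : (2 : ℕ∞) < 3))
  obtain ⟨a, ha, -⟩ := hS v
  have : Nonempty V := ⟨v⟩
  obtain ⟨b, hb⟩ := card_le_one_iff_subset_singleton.mp (show #(S.erase a) ≤ 1 by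
    have : #S < 3 := by exact_mod_cast hlt
    rw [card_erase_of_mem ha]
    omega)
  refine ⟨a, b, fun z => ?_⟩
  obtain ⟨u, hu, hzu⟩ := hS z
  by_cases hua : u = a
  · exact .inl (hua ▸ hzu)
  · exact .inr (mem_singleton.mp (hb (mem_erase.mpr ⟨hua, hu⟩)) ▸ hzu)

def DominatesExcept (G : SimpleGraph V) (a b e : V) : Prop :=
  ∀ z, z ≠ e → G.Adj z a ∨ G.Adj z b

theorem DominatesExcept.not_adj (h3 : gammaT G = 3) (h : DominatesExcept G a b e) :
    ¬G.Adj e b := fun he =>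
  not_forall_adj_or_adj_of_gammaT_eq_three h3 fun z =>
    (eq_or_ne z e).elim (fun hz => .inr (hz ▸ he)) (h z)

theorem DominatesExcept.adj_and_adj (hxy : ¬G.Adj x y) (h : DominatesExcept G a q e)
    (hq : q = x ∨ q = y) (hae : a ≠ e) (he : e ≠ x ∧ e ≠ y) : G.Adj a x ∧ G.Adj a y := by
  have haq : G.Adj a q := (h a hae).resolve_left G.irrefl
  rcases hq with rfl | rfl
  · exact ⟨haq, ((h y he.2.symm).resolve_right fun h => hxy h.symm).symm⟩
  · exact ⟨((h x he.1.symm).resolve_right hxy).symm, haq⟩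

theorem card_le_card_of_dominatesExcept (h3 : gammaT G = 3) {N Q : Finset V}
    (hN : ∀ z ∈ N, ¬G.Adj z a) (hQ : ∀ z ∈ N, ∃ q ∈ Q, DominatesExcept G a q z) :
    #N ≤ #Q := by
  choose! f hfQ hf using hQ
  refine card_le_card_of_injOn f hfQ fun z hz z' hz' hff => ?_
  by_contra hne
  have := ((hf z hz) z' (Ne.symm hne)).resolve_left (hN z' hz')
  exact (hf z' hz').not_adj h3 (hff ▸ this)

theorem dominatesExcept_of_forall_sup_edge_adj (huv : Gᶜ.Adj u v) (hzu : Gᶜ.Adj z u)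
    (hzv : Gᶜ.Adj z v) (h : ∀ w, (G ⊔ edge u v).Adj w u ∨ (G ⊔ edge u v).Adj w q) :
    DominatesExcept G u q v := by
  simp only [sup_adj, edge_adj] at h
  rw [compl_adj] at huv hzu hzv
  have hqv : q ≠ v := by
    rintro rfl
    have := h z
    tauto
  intro w hw
  have := h w
  tauto

theorem Critical3.exists_dominatesExcept [DecidableEq V] (hG : Critical3 G)
    (huv : Gᶜ.Adj u v) (hzu : Gᶜ.Adj z u) (hzv : Gᶜ.Adj z v) :
    ∃ q, DominatesExcept G u q v ∨ DominatesExcept G v q u := by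
  obtain ⟨p, q, hpq⟩ := exists_forall_adj_or_adj_of_gammaT_eq_two (hG.2 u v huv.ne huv.2) u
  change ∀ w, (G ⊔ edge u v).Adj w p ∨ (G ⊔ edge u v).Adj w q at hpq
  have hqp : ∀ w, (G ⊔ edge u v).Adj w q ∨ (G ⊔ edge u v).Adj w p := fun w => (hpq w).symm
  have hvu : G ⊔ edge u v = G ⊔ edge v u := by rw [edge_comm]
  by_cases hp : p = u ∨ p = v
  · rcases hp with rfl | rfl
    · exact ⟨q, .inl (dominatesExcept_of_forall_sup_edge_adj huv hzu hzv hpq)⟩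
    · exact ⟨q, .inr (dominatesExcept_of_forall_sup_edge_adj huv.symm hzv hzu (hvu ▸ hpq))⟩
  by_cases hq : q = u ∨ q = v
  · rcases hq with rfl | rfl
    · exact ⟨p, .inl (dominatesExcept_of_forall_sup_edge_adj huv hzu hzv hqp)⟩
    · exact ⟨p, .inr (dominatesExcept_of_forall_sup_edge_adj huv.symm hzv hzu (hvu ▸ hqp))⟩
  -- otherwise `{p, q}` already totally dominates `G`
  refine absurd (fun w => ?_) (not_forall_adj_or_adj_of_gammaT_eq_three hG.1 (a := p) (b := q))
  have := hpq w
  simp only [sup_adj, edge_adj] at this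
  tauto

theorem SimpleGraph.ncard_edgeSet_le_sum_of_isIndepSet_compl [DecidableEq V]
    {H : SimpleGraph V} [DecidableRel H.Adj] (S T : Finset V) (hST : ∀ v, v ∈ S ∨ v ∈ T)
    (hS : H.IsIndepSet (↑S)ᶜ) (hT : H.IsIndepSet (↑T)ᶜ) :
    H.edgeSet.ncard ≤ ∑ u ∈ S, #{v ∈ T | H.Adj u v} := by
  set E := S.biUnion fun u => {v ∈ T | H.Adj u v}.image fun v => s(u, v)
  have hsub : H.edgeSet ⊆ ↑E := by
    intro e he
    induction e using Sym2.ind with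
    | h a b =>
    have hab : H.Adj a b := he
    have key : a ∈ S ∧ b ∈ T ∨ b ∈ S ∧ a ∈ T := by
      have hS' : a ∉ S → b ∉ S → False := fun ha hb => hS ha hb hab.ne hab
      have hT' : a ∉ T → b ∉ T → False := fun ha hb => hT ha hb hab.ne hab
      have := hST a
      have := hST b
      tauto
    rw [mem_coe, mem_biUnion]
    rcases key with ⟨ha, hb⟩ | ⟨hb, ha⟩
    · exact ⟨a, ha, mem_image.mpr ⟨b, mem_filter.mpr ⟨hb, hab⟩, rfl⟩⟩
    · exact ⟨b, hb, mem_image.mpr ⟨a, mem_filter.mpr ⟨ha, hab.symm⟩, Sym2.eq_swap⟩⟩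
  calc H.edgeSet.ncard ≤ #E := by
        rw [← Set.ncard_coe_finset]
        exact Set.ncard_le_ncard hsub
    _ ≤ ∑ u ∈ S, #({v ∈ T | H.Adj u v}.image fun v => s(u, v)) := card_biUnion_le
    _ ≤ _ := sum_le_sum fun u _ => card_image_le

theorem Nat.lt_sq_div_four_of_le {m k r a b p s : ℕ} (hm : m ≤ 1 + a + b + r * k + s)
    (hk : a + b + p ≤ k) (ha : 1 ≤ a) (hb : 1 ≤ b) (hr : 1 ≤ r) (hs : s ≤ 2 * p)
    (hs' : s = 0 ∨ r = 1) : m < (k + r + 2) ^ 2 / 4 := by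
  rw [Nat.lt_iff_add_one_le, Nat.le_div_iff_mul_le (by norm_num)]
  rcases hs' with rfl | rfl
  · zify at hm hk hr ⊢
    nlinarith [sq_nonneg ((k : ℤ) - r)]
  · zify at hm hk ha hb hs ⊢
    nlinarith [sq_nonneg ((k : ℤ) - 3)]

section Separation

variable [Fintype V] [DecidableEq V] {K R : Finset V}

structure IsSeparation (G : SimpleGraph V) (x y : V) (K R : Finset V) : Prop where
  union_eq : K ∪ R = {x, y}ᶜ
  disjoint : Disjoint K R
  not_adj : ∀ ⦃v⦄, v ∈ K → ∀ ⦃w⦄, w ∈ R → ¬G.Adj v w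
  nonempty_left : K.Nonempty
  nonempty_right : R.Nonempty

theorem RemovalDisconnects.exists_isSeparation (h : RemovalDisconnects G {x, y}) :
    ∃ K R, IsSeparation G x y K R := by
  classical
  obtain ⟨a, b, hab⟩ := h
  let K : Finset V := {v | ∃ hv : v ∈ ({x, y} : Set V)ᶜ, (G.induce _).Reachable a ⟨v, hv⟩}
  have hK : K ⊆ {x, y}ᶜ := fun v hv => by
    obtain ⟨hv, -⟩ := (mem_filter.mp hv).2
    simpa using hv
  refine ⟨K, {x, y}ᶜ \ K, union_sdiff_of_subset hK, disjoint_sdiff, fun v hv w hw hvw => ?_,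
    ⟨a, mem_filter.mpr ⟨mem_univ _, a.2, .rfl⟩⟩, ⟨b, ?_⟩⟩
  · obtain ⟨_, hav⟩ := (mem_filter.mp hv).2
    have hw' : w ∈ ({x, y} : Set V)ᶜ := by simpa using (mem_sdiff.mp hw).1
    exact (mem_sdiff.mp hw).2 (mem_filter.mpr ⟨mem_univ _, hw', hav.trans (Adj.reachable hvw)⟩)
  · have := b.2
    simp only [Set.mem_compl_iff, Set.mem_insert_iff, Set.mem_singleton_iff, not_or] at this
    simpa [K, this] using hab

namespace IsSeparation

theorem symm (h : IsSeparation G x y K R) : IsSeparation G x y R K :=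
  ⟨by rw [union_comm, h.union_eq], h.disjoint.symm,
    fun _ hv _ hw hvw => h.not_adj hw hv hvw.symm, h.nonempty_right, h.nonempty_left⟩

theorem swap (h : IsSeparation G x y K R) : IsSeparation G y x K R :=
  { h with union_eq := by rw [h.union_eq, pair_comm] }

theorem mem_or_mem (h : IsSeparation G x y K R) (hx : v ≠ x) (hy : v ≠ y) :
    v ∈ K ∨ v ∈ R := by
  rw [← mem_union, h.union_eq]
  simp [hx, hy]

theorem ne_of_mem_left (h : IsSeparation G x y K R) (hv : v ∈ K) : v ≠ x ∧ v ≠ y := by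
  have hv : v ∈ K ∪ R := mem_union_left R hv
  rw [h.union_eq] at hv
  simpa using hv

theorem compl_adj (h : IsSeparation G x y K R) (hv : v ∈ K) (hw : w ∈ R) : Gᶜ.Adj v w :=
  ⟨fun hvw => disjoint_left.mp h.disjoint hv (hvw ▸ hw), h.not_adj hv hw⟩

theorem eq_or_eq_of_adj (h : IsSeparation G x y K R) (hv : v ∈ K) (hw : w ∈ R)
    (hvq : G.Adj v q) (hwq : G.Adj w q) : q = x ∨ q = y := by
  by_contra! hq
  rcases h.mem_or_mem hq.1 hq.2 with hq | hq
  · exact h.not_adj hq hw hwq.symm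
  · exact h.not_adj hv hq hvq

theorem common_adj (h : IsSeparation G x y K R) (hdiam : DiamTwo G) (hv : v ∈ K) (hw : w ∈ R) :
    G.Adj v x ∧ G.Adj w x ∨ G.Adj v y ∧ G.Adj w y := by
  obtain ⟨hne, hnadj⟩ := h.compl_adj hv hw
  obtain hvw | ⟨t, hvt, htw⟩ := hdiam.1 v w hne
  · exact absurd hvw hnadj
  rcases h.eq_or_eq_of_adj hv hw hvt htw.symm with rfl | rfl
  exacts [.inl ⟨hvt, htw.symm⟩, .inr ⟨hvt, htw.symm⟩]

theorem adj_or_adj (h : IsSeparation G x y K R) (hdiam : DiamTwo G) (hx : v ≠ x) (hy : v ≠ y) :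
    G.Adj v x ∨ G.Adj v y := by
  rcases h.mem_or_mem hx hy with hv | hv
  · obtain ⟨w, hw⟩ := h.nonempty_right
    rcases h.common_adj hdiam hv hw with ⟨hvx, -⟩ | ⟨hvy, -⟩
    exacts [.inl hvx, .inr hvy]
  · obtain ⟨u, hu⟩ := h.nonempty_left
    rcases h.common_adj hdiam hu hv with ⟨-, hvx⟩ | ⟨-, hvy⟩
    exacts [.inl hvx, .inr hvy]

theorem not_adj_cut (h : IsSeparation G x y K R) (h3 : gammaT G = 3) (hdiam : DiamTwo G) :
    ¬G.Adj x y := fun hxy =>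
  not_forall_adj_or_adj_of_gammaT_eq_three h3 fun z =>
    if hzx : z = x then .inr (hzx ▸ hxy) else if hzy : z = y then .inl (hzy ▸ hxy.symm)
    else h.adj_or_adj hdiam hzx hzy

theorem exists_adj_not_adj (h : IsSeparation G x y K R) (h3 : gammaT G = 3)
    (hdiam : DiamTwo G) : ∃ u, G.Adj u x ∧ ¬G.Adj u y := by
  by_contra! hno
  obtain ⟨t, hxt⟩ : ∃ t, G.Adj x t := by
    obtain ⟨v, hv⟩ := h.nonempty_left
    rcases hdiam.1 x v (h.ne_of_mem_left hv).1.symm with hxv | ⟨t, hxt, -⟩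
    exacts [⟨v, hxv⟩, ⟨t, hxt⟩]
  refine not_forall_adj_or_adj_of_gammaT_eq_three (a := y) (b := t) h3 fun z => ?_
  if hzx : z = x then exact .inr (hzx ▸ hxt)
  else if hzy : z = y then exact .inr (hzy ▸ (hno t hxt.symm).symm)
  else exact .inl ((h.adj_or_adj hdiam hzx hzy).elim (hno z) id)

theorem exists_mem_left_of_adj_not_adj (h : IsSeparation G x y K R) (hdiam : DiamTwo G)
    (hxy : ¬G.Adj x y) (hux : G.Adj u x) (huy : ¬G.Adj u y) (hvy : G.Adj v y)
    (hvx : ¬G.Adj v x) : ∃ K R, IsSeparation G x y K R ∧ u ∈ K ∧ v ∈ K := by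
  have hu := h.mem_or_mem (G.ne_of_adj hux) (by rintro rfl; exact hxy hux.symm)
  have hv := h.mem_or_mem (by rintro rfl; exact hxy hvy) (G.ne_of_adj hvy)
  rcases hu with hu | hu <;> rcases hv with hv | hv
  · exact ⟨K, R, h, hu, hv⟩
  · rcases h.common_adj hdiam hu hv with ⟨-, h'⟩ | ⟨h', -⟩
    exacts [absurd h' hvx, absurd h' huy]
  · rcases h.common_adj hdiam hv hu with ⟨h', -⟩ | ⟨-, h'⟩
    exacts [absurd h' hvx, absurd h' huy]
  · exact ⟨R, K, h.symm, hu, hv⟩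

theorem adj_of_mem_right (h : IsSeparation G x y K R) (hdiam : DiamTwo G)
    (hKy : ∃ u ∈ K, ¬G.Adj u y) (hw : w ∈ R) : G.Adj w x := by
  obtain ⟨u, hu, huy⟩ := hKy
  rcases h.common_adj hdiam hu hw with ⟨-, hwx⟩ | ⟨huy', -⟩
  exacts [hwx, absurd huy' huy]

theorem not_dominatesExcept_of_mem_right (h : IsSeparation G x y K R)
    (hKx : ∃ v ∈ K, ¬G.Adj v x) (hKy : ∃ u ∈ K, ¬G.Adj u y) (ha : a ∈ R) (hae : a ≠ e)
    (hex : G.Adj e x) (hey : G.Adj e y) : ¬DominatesExcept G a q e := by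
  intro hd
  obtain ⟨v, hv, hvx⟩ := hKx
  obtain ⟨u, hu, huy⟩ := hKy
  have hvq := (hd v (by rintro rfl; exact hvx hex)).resolve_left (h.not_adj hv ha)
  have huq := (hd u (by rintro rfl; exact huy hey)).resolve_left (h.not_adj hu ha)
  rcases h.eq_or_eq_of_adj hu ha huq ((hd a hae).resolve_left G.irrefl) with rfl | rfl
  exacts [hvx hvq, huy huq]

theorem not_dominatesExcept_of_mem_left (h : IsSeparation G x y K R) (h3 : gammaT G = 3)
    (ha : a ∈ K) (he : e ∈ R) (hc : c ∈ R) (hce : c ≠ e) (hex : G.Adj e x)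
    (hey : G.Adj e y) : ¬DominatesExcept G a q e := by
  intro hd
  have hcq := (hd c hce).resolve_left fun hca => h.not_adj ha hc hca.symm
  have haq := (hd a (h.compl_adj ha he).ne).resolve_left G.irrefl
  rcases h.eq_or_eq_of_adj ha hc haq hcq with rfl | rfl
  exacts [hd.not_adj h3 hex, hd.not_adj h3 hey]

theorem isClique_insert_right (h : IsSeparation G x y K R) (hG : Critical3 G)
    (hdiam : DiamTwo G) (hKx : ∃ v ∈ K, ¬G.Adj v x) (hKy : ∃ u ∈ K, ¬G.Adj u y) :
    G.IsClique (insert x (R : Set V)) := by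
  have hRx := fun w (hw : w ∈ R) => h.adj_of_mem_right hdiam hKy hw
  have hRy := fun w (hw : w ∈ R) => h.swap.adj_of_mem_right hdiam hKx hw
  refine isClique_insert.mpr ⟨fun w hw w' hw' hne => ?_, fun w hw _ => (hRx w hw).symm⟩
  by_contra hnadj
  obtain ⟨u, hu⟩ := h.nonempty_left
  obtain ⟨q, hq | hq⟩ :=
    hG.exists_dominatesExcept ⟨hne, hnadj⟩ (h.compl_adj hu hw) (h.compl_adj hu hw')
  · exact h.not_dominatesExcept_of_mem_right hKx hKy hw hne (hRx w' hw') (hRy w' hw') hq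
  · exact h.not_dominatesExcept_of_mem_right hKx hKy hw' (Ne.symm hne) (hRx w hw) (hRy w hw) hq

theorem exists_dominatesExcept_of_mem_left (h : IsSeparation G x y K R) (hG : Critical3 G)
    (hs : s ∈ K) (ht : t ∈ K) (hst : Gᶜ.Adj s t) :
    ∃ q, (q = x ∨ q = y) ∧ (DominatesExcept G s q t ∨ DominatesExcept G t q s) := by
  obtain ⟨c, hc⟩ := h.nonempty_right
  have key {d e q} (hd : d ∈ K) (he : e ∈ K) (hde : d ≠ e) (hdom : DominatesExcept G d q e) :
      q = x ∨ q = y :=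
    h.eq_or_eq_of_adj hd hc ((hdom _ hde).resolve_left G.irrefl)
      ((hdom c (h.compl_adj he hc).ne.symm).resolve_left fun hcd => h.not_adj hd hc hcd.symm)
  obtain ⟨q, hq | hq⟩ :=
    hG.exists_dominatesExcept hst (h.compl_adj hs hc).symm (h.compl_adj ht hc).symm
  exacts [⟨q, key hs ht hst.ne hq, .inl hq⟩, ⟨q, key ht hs hst.ne.symm hq, .inr hq⟩]

theorem isClique_not_adj_and_adj (h : IsSeparation G x y K R) (hG : Critical3 G)
    (hxy : ¬G.Adj x y) : G.IsClique {v | v ∈ K ∧ ¬(G.Adj v x ∧ G.Adj v y)} := by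
  intro s hs t ht hst
  by_contra hnadj
  obtain ⟨q, hq, hd | hd⟩ := h.exists_dominatesExcept_of_mem_left hG hs.1 ht.1 ⟨hst, hnadj⟩
  · exact hs.2 (hd.adj_and_adj hxy hq hst (h.ne_of_mem_left ht.1))
  · exact ht.2 (hd.adj_and_adj hxy hq (Ne.symm hst) (h.ne_of_mem_left hs.1))

theorem card_compl_adj_le_two [DecidableRel G.Adj] (h : IsSeparation G x y K R)
    (hG : Critical3 G) (hp : p ∈ K) (hpx : G.Adj p x) (hpy : G.Adj p y) :
    #{v ∈ K | Gᶜ.Adj p v} ≤ 2 := by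
  refine (card_le_card_of_dominatesExcept hG.1 (a := p) (Q := {x, y})
    (fun z hz hzp => (mem_filter.mp hz).2.2 hzp.symm) fun z hz => ?_).trans card_le_two
  obtain ⟨hz, hpz⟩ := mem_filter.mp hz
  obtain ⟨q, hq, hd | hd⟩ := h.exists_dominatesExcept_of_mem_left hG hp hz hpz
  · exact ⟨q, by rcases hq with rfl | rfl <;> simp, hd⟩
  · rcases hq with rfl | rfl
    exacts [absurd hpx (hd.not_adj hG.1), absurd hpy (hd.not_adj hG.1)]

theorem card_right_le_one (h : IsSeparation G x y K R) (hG : Critical3 G) (hdiam : DiamTwo G)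
    (hKx : ∃ v ∈ K, ¬G.Adj v x) (hKy : ∃ u ∈ K, ¬G.Adj u y) (hd : d ∈ K) (hdx : G.Adj d x)
    (hdy : G.Adj d y) (he : e ∈ K) (hde : Gᶜ.Adj d e) : #R ≤ 1 := by
  refine card_le_one.mpr fun c hc c' hc' => ?_
  by_contra hne
  have hcx := h.adj_of_mem_right hdiam hKy hc
  have hcy := h.swap.adj_of_mem_right hdiam hKx hc
  obtain ⟨q, hq | hq⟩ :=
    hG.exists_dominatesExcept (h.compl_adj hd hc) hde.symm (h.compl_adj he hc)
  · exact h.not_dominatesExcept_of_mem_left hG.1 hd hc hc' (Ne.symm hne) hcx hcy hq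
  · exact h.not_dominatesExcept_of_mem_right hKx hKy hc (h.compl_adj hd hc).ne.symm hdx hdy hq

theorem ncard_compl_edgeSet_le_sum [DecidableRel G.Adj] (h : IsSeparation G x y K R)
    (hG : Critical3 G) (hdiam : DiamTwo G) (hKx : ∃ v ∈ K, ¬G.Adj v x)
    (hKy : ∃ u ∈ K, ¬G.Adj u y) :
    Gᶜ.edgeSet.ncard ≤ ∑ u ∈ insert x (insert y (R ∪ {p ∈ K | G.Adj p x ∧ G.Adj p y})),
      #{v ∈ insert y K | Gᶜ.Adj u v} := by
  set P := {p ∈ K | G.Adj p x ∧ G.Adj p y}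
  have hS : G.IsClique (↑(insert x (insert y (R ∪ P))))ᶜ :=
    (h.isClique_not_adj_and_adj hG (h.not_adj_cut hG.1 hdiam)).subset fun v hv => by
      simp only [coe_insert, coe_union, Set.mem_compl_iff, Set.mem_insert_iff, Set.mem_union,
        mem_coe, not_or] at hv
      have hvK := (h.mem_or_mem hv.1 hv.2.1).resolve_right hv.2.2.1
      exact ⟨hvK, fun hvP => hv.2.2.2 (mem_filter.mpr ⟨hvK, hvP⟩)⟩
  have hT : G.IsClique (↑(insert y K))ᶜ :=
    (h.isClique_insert_right hG hdiam hKx hKy).subset fun v hv => by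
      simp only [coe_insert, Set.mem_compl_iff, Set.mem_insert_iff, mem_coe, not_or] at hv
      exact (eq_or_ne v x).imp_right fun hvx => (h.mem_or_mem hvx hv.1).resolve_left hv.2
  refine ncard_edgeSet_le_sum_of_isIndepSet_compl _ _ (fun v => ?_)
    ((isIndepSet_compl (G := G)).mpr hS) ((isIndepSet_compl (G := G)).mpr hT)
  by_cases hvx : v = x
  · simp [hvx]
  by_cases hvy : v = y
  · simp [hvy]
  rcases h.mem_or_mem hvx hvy with hv | hv <;> simp [hv]

theorem ncard_compl_edgeSet_le [DecidableRel G.Adj] (h : IsSeparation G x y K R)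
    (hne : x ≠ y) (hG : Critical3 G) (hdiam : DiamTwo G) (hKx : ∃ v ∈ K, ¬G.Adj v x)
    (hKy : ∃ u ∈ K, ¬G.Adj u y) :
    Gᶜ.edgeSet.ncard ≤ 1 + #{v ∈ K | ¬G.Adj v x} + #{v ∈ K | ¬G.Adj v y} + #R * #K +
      ∑ p ∈ K with G.Adj p x ∧ G.Adj p y, #{v ∈ K | Gᶜ.Adj p v} := by
  set P := {p ∈ K | G.Adj p x ∧ G.Adj p y}
  have hPK : P ⊆ K := filter_subset _ _
  have hxR : x ∉ R := fun hx => (h.symm.ne_of_mem_left hx).1 rfl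
  have hyR : y ∉ R := fun hy => (h.symm.ne_of_mem_left hy).2 rfl
  refine (h.ncard_compl_edgeSet_le_sum hG hdiam hKx hKy).trans ?_
  rw [sum_insert (by simp [hne, hxR]), sum_insert (by simp [hyR]),
    sum_union (disjoint_of_subset_right hPK h.disjoint.symm)]
  have hy_filter (u : V) (hu : G.Adj u y) :
      {v ∈ insert y K | Gᶜ.Adj u v} = {v ∈ K | Gᶜ.Adj u v} := by
    rw [filter_insert, if_neg fun h' => h'.2 hu]
  have hfx : #{v ∈ insert y K | Gᶜ.Adj x v} ≤ #{v ∈ K | ¬G.Adj v x} + 1 := by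
    rw [filter_insert, if_pos ⟨hne, h.not_adj_cut hG.1 hdiam⟩]
    refine (card_insert_le _ _).trans (add_le_add_left (card_le_card fun v hv => ?_) 1)
    simp only [mem_filter] at hv ⊢
    exact ⟨hv.1, fun hvx => hv.2.2 hvx.symm⟩
  have hfy : #{v ∈ insert y K | Gᶜ.Adj y v} ≤ #{v ∈ K | ¬G.Adj v y} := by
    rw [filter_insert, if_neg fun h' => h'.1 rfl]
    refine card_le_card fun v hv => ?_
    simp only [mem_filter] at hv ⊢
    exact ⟨hv.1, fun hvy => hv.2.2 hvy.symm⟩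
  have hfR : ∑ w ∈ R, #{v ∈ insert y K | Gᶜ.Adj w v} ≤ #R * #K := by
    rw [← smul_eq_mul]
    refine sum_le_card_nsmul _ _ _ fun w hw => ?_
    rw [hy_filter w (h.swap.adj_of_mem_right hdiam hKx hw)]
    exact card_filter_le _ _
  have hfP : ∑ p ∈ P, #{v ∈ insert y K | Gᶜ.Adj p v} = ∑ p ∈ P, #{v ∈ K | Gᶜ.Adj p v} :=
    sum_congr rfl fun p hp => by rw [hy_filter p (mem_filter.mp hp).2.2]
  omega

theorem ncard_compl_edgeSet_lt (h : IsSeparation G x y K R) (hne : x ≠ y) (hG : Critical3 G)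
    (hdiam : DiamTwo G) (hKx : ∃ v ∈ K, ¬G.Adj v x) (hKy : ∃ u ∈ K, ¬G.Adj u y) :
    Gᶜ.edgeSet.ncard < Fintype.card V ^ 2 / 4 := by
  classical
  have hcount := h.ncard_compl_edgeSet_le hne hG hdiam hKx hKy
  set P := {p ∈ K | G.Adj p x ∧ G.Adj p y}
  have hn : Fintype.card V = #K + #R + 2 := by
    rw [← card_union_of_disjoint h.disjoint, h.union_eq, card_compl, card_pair hne]
    have : 2 ≤ Fintype.card V := by
      simpa [card_pair hne] using card_le_univ ({x, y} : Finset V)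
    omega
  have hsplit : #{v ∈ K | ¬G.Adj v x} + #{v ∈ K | ¬G.Adj v y} + #P ≤ #K := by
    rw [card_filter, card_filter, card_filter, ← sum_add_distrib, ← sum_add_distrib,
      card_eq_sum_ones]
    refine sum_le_sum fun v hv => ?_
    have := h.adj_or_adj hdiam (h.ne_of_mem_left hv).1 (h.ne_of_mem_left hv).2
    split_ifs <;> tauto
  have hKx1 : 1 ≤ #{v ∈ K | ¬G.Adj v x} := card_pos.mpr (by simpa [Finset.Nonempty] using hKx)
  have hKy1 : 1 ≤ #{v ∈ K | ¬G.Adj v y} := card_pos.mpr (by simpa [Finset.Nonempty] using hKy)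
  have hR1 : 1 ≤ #R := card_pos.mpr h.nonempty_right
  have hP : ∑ p ∈ P, #{v ∈ K | Gᶜ.Adj p v} ≤ 2 * #P := by
    rw [mul_comm, ← smul_eq_mul]
    exact sum_le_card_nsmul _ _ _ fun p hp =>
      h.card_compl_adj_le_two hG (mem_filter.mp hp).1 (mem_filter.mp hp).2.1 (mem_filter.mp hp).2.2
  have hP0 : ∑ p ∈ P, #{v ∈ K | Gᶜ.Adj p v} = 0 ∨ #R = 1 := by
    by_cases hK : ∀ p ∈ P, ∀ v ∈ K, ¬Gᶜ.Adj p v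
    · exact .inl (sum_eq_zero fun p hp => card_eq_zero.mpr (filter_eq_empty_iff.mpr (hK p hp)))
    push Not at hK
    obtain ⟨p, hp, v, hv, hpv⟩ := hK
    obtain ⟨hpK, hpx, hpy⟩ := mem_filter.mp hp
    have := h.card_right_le_one hG hdiam hKx hKy hpK hpx hpy hv hpv
    omega
  rw [hn]
  exact Nat.lt_sq_div_four_of_le hcount hsplit hKx1 hKy1 hR1 hP hP0

end IsSeparation

end Separation

end

theorem stmt19_general {V : Type*} [Fintype V] [DecidableEq V] (G : SimpleGraph V)
    (hcrit : Critical3 G) (hdiam : DiamTwo G)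
    (hcut2 : ∃ x y : V, x ≠ y ∧ RemovalDisconnects G {x, y}) :
    Gᶜ.edgeSet.ncard < Fintype.card V ^ 2 / 4 := by
  obtain ⟨x, y, hne, hcut⟩ := hcut2
  obtain ⟨K, R, hsep⟩ := hcut.exists_isSeparation
  have hxy := hsep.not_adj_cut hcrit.1 hdiam
  obtain ⟨u, hux, huy⟩ := hsep.exists_adj_not_adj hcrit.1 hdiam
  obtain ⟨v, hvy, hvx⟩ := hsep.swap.exists_adj_not_adj hcrit.1 hdiam
  obtain ⟨K, R, hsep, hu, hv⟩ := hsep.exists_mem_left_of_adj_not_adj hdiam hxy hux huy hvy hvx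
  exact hsep.ncard_compl_edgeSet_lt hne hcrit hdiam ⟨v, hv, hvx⟩ ⟨u, hu, huy⟩

/-- A 3-γₜ-edge-critical graph of diameter two on n vertices
with vertex connectivity two has fewer than ⌊n²/4⌋ missing edges. -/
theorem stmt19 {V : Type*} [Fintype V] [DecidableEq V] (G : SimpleGraph V)
    (hcrit : Critical3 G) (hconn : G.Connected) (hdiam : DiamTwo G)
    (hnocut : ∀ v : V, ¬ RemovalDisconnects G {v})
    (hcut2 : ∃ x y : V, x ≠ y ∧ RemovalDisconnects G {x, y}) :
    Gᶜ.edgeSet.ncard < Fintype.card V ^ 2 / 4 :=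
  stmt19_general G hcrit hdiam hcut2
end
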